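/- Let J ⊆ I and let W_J(C) be the parabolic subgroupoid generated by all σ_j^a with j ∈ J. Then for every morphism w ∈ W_J(C), the length ℓ_J(w) computed using only generators σ_j with j ∈ J equals the length ℓ(w) in the full Weyl groupoid. -/

import Mathlib

set_option linter.unusedSectionVars false

/-- A Cartan scheme `C = C(I, A, (ρ_i), (C^a))`. -/
structure CartanScheme (I A : Type) [Fintype I] [DecidableEq I] [Fintype A] [Nonempty A] where
  ρ : I → A → A
  c : A → I → I → ℤ
  ρ_invol : ∀ i a, ρ i (ρ i a) = a
  c_diag : ∀ a i, c a i i = 2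
  c_offdiag_nonpos : ∀ a i j, i ≠ j → c a i j ≤ 0
  c_zero_symm : ∀ a i j, c a i j = 0 → c a j i = 0
  c_rho : ∀ a i j, c (ρ i a) i j = c a i j

namespace CartanScheme

variable {I A : Type} [Fintype I] [DecidableEq I] [Fintype A] [Nonempty A] [DecidableEq A]
variable (C : CartanScheme I A)

/-- The simple reflection `σ_i^a` as a map `ℤ^I → ℤ^I`, `σ_i^a(α_j) = α_j - c^a_{ij} α_i`. -/
def sigma (a : A) (i : I) : (I → ℤ) → (I → ℤ) :=
  fun v k => v k - (if k = i then ∑ j, C.c a i j * v j else 0)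

/-- Target object of the word `[i_1, …, i_k]` read at source object `a`:
`ρ_{i_1} ⋯ ρ_{i_k}(a)`. -/
def wordTarget (a : A) : List I → A
  | [] => a
  | i :: l => C.ρ i (wordTarget a l)

/-- The map `σ_{i_1} ⋯ σ_{i_k}^a : ℤ^I → ℤ^I` determined by a word with source `a`. -/
def wordMap (a : A) : List I → ((I → ℤ) → (I → ℤ))
  | [] => id
  | i :: l => C.sigma (C.wordTarget a l) i ∘ wordMap a l

theorem wordTarget_append (a : A) (l₁ l₂ : List I) :
    C.wordTarget a (l₁ ++ l₂) = C.wordTarget (C.wordTarget a l₂) l₁ := by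
  induction l₁ with
  | nil => rfl
  | cons i l ih => simp [wordTarget, ih]

theorem wordMap_append (a : A) (l₁ l₂ : List I) :
    C.wordMap a (l₁ ++ l₂) = C.wordMap (C.wordTarget a l₂) l₁ ∘ C.wordMap a l₂ := by
  induction l₁ with
  | nil => rfl
  | cons i l ih => simp [wordMap, ih, wordTarget_append, Function.comp_assoc]

/-- A morphism of the Weyl groupoid `W(C)`: a source object, a target object, and a map
`ℤ^I → ℤ^I` which is a composition of simple reflections along some word. -/
@[ext]
structure Mor where
  src : A
  tgt : A
  toFun : (I → ℤ) → (I → ℤ)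
  spec : ∃ l : List I, C.wordTarget src l = tgt ∧ C.wordMap src l = toFun

variable {C}

/-- A word realizes a morphism. -/
def Realizes (w : Mor C) (l : List I) : Prop :=
  C.wordTarget w.src l = w.tgt ∧ C.wordMap w.src l = w.toFun

variable (C)

/-- The identity morphism `id^a`. -/
def idMor (a : A) : Mor C := ⟨a, a, id, ⟨[], rfl, rfl⟩⟩

/-- The generator `σ_i^a ∈ Hom(a, ρ_i(a))`. -/
def genMor (i : I) (a : A) : Mor C :=
  ⟨a, C.ρ i a, C.sigma a i, ⟨[i], rfl, Function.comp_id _⟩⟩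

/-- The simple reflection with target `a`, i.e. `id^a σ_i = σ_i^{ρ_i(a)} ∈ Hom(ρ_i(a), a)`. -/
def sgen (a : A) (i : I) : Mor C :=
  { src := C.ρ i a, tgt := a, toFun := C.sigma (C.ρ i a) i,
    spec := ⟨[i], by simp [wordTarget, C.ρ_invol], Function.comp_id _⟩ }

variable {C}

/-- Composition `u ∘ v` (with `v` applied first); junk value `u` if not composable. -/
def Mor.comp (u v : Mor C) : Mor C :=
  if h : v.tgt = u.src then
    { src := v.src, tgt := u.tgt, toFun := u.toFun ∘ v.toFun,
      spec := by
        obtain ⟨lu, hu1, hu2⟩ := u.spec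
        obtain ⟨lv, hv1, hv2⟩ := v.spec
        refine ⟨lu ++ lv, ?_, ?_⟩
        · rw [C.wordTarget_append, hv1, h, hu1]
        · rw [C.wordMap_append, hv1, h, hu2, hv2] }
  else u

/-- Length of a morphism: minimal length of a realizing word. -/
noncomputable def len (w : Mor C) : ℕ := sInf {k | ∃ l : List I, Realizes w l ∧ l.length = k}

/-- A reduced decomposition. -/
def IsReduced (w : Mor C) (l : List I) : Prop := Realizes w l ∧ l.length = len w

/-- The (right) weak order: `u ≤_R uv` iff `ℓ(uv) = ℓ(u) + ℓ(v)`. -/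
def weakLe (u w : Mor C) : Prop :=
  ∃ v : Mor C, v.tgt = u.src ∧ w = u.comp v ∧ len w = len u + len v

/-- Membership in the parabolic subgroupoid `W_J(C)`. -/
def InParabolic (J : Set I) (w : Mor C) : Prop :=
  ∃ l : List I, (∀ i ∈ l, i ∈ J) ∧ Realizes w l

/-- Length with respect to the generators `σ_j`, `j ∈ J`. -/
noncomputable def lenPar (J : Set I) (w : Mor C) : ℕ :=
  sInf {k | ∃ l : List I, (∀ i ∈ l, i ∈ J) ∧ Realizes w l ∧ l.length = k}

/-- The set of letters occurring in some reduced decomposition of `w`;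
by the theorem on reduced decompositions this is the set `J(w)`. -/
def Jset (w : Mor C) : Set I := {i | ∃ l : List I, IsReduced w l ∧ i ∈ l}

variable (C)

/-- The set of real roots at the object `a`. -/
def roots (a : A) : Set (I → ℤ) :=
  {α | ∃ (b : A) (l : List I) (j : I),
    C.wordTarget b l = a ∧ α = C.wordMap b l (Pi.single j 1)}

/-- The set of positive (real) roots at `a`. -/
def posRoots (a : A) : Set (I → ℤ) := {α ∈ C.roots a | ∀ i, 0 ≤ α i}

/-- `R^re(C)` is a finite root system of type `C`: axioms (R1), (R2), (R4) and finiteness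
((R3) holds automatically for real roots). -/
def IsFRS : Prop :=
  (∀ a : A, (C.roots a).Finite) ∧
  (∀ (a : A) (α : I → ℤ), α ∈ C.roots a → (∀ i, 0 ≤ α i) ∨ (∀ i, α i ≤ 0)) ∧
  (∀ (a : A) (i : I) (α : I → ℤ), α ∈ C.roots a → (∃ z : ℤ, α = z • Pi.single i 1) →
    α = Pi.single i 1 ∨ α = -Pi.single i 1) ∧
  (∀ (a : A) (i j : I), i ≠ j →
    (fun x => C.ρ i (C.ρ j x))^[(C.roots a ∩
      {α | ∃ m n : ℕ, α = (m : ℤ) • Pi.single i 1 + (n : ℤ) • Pi.single j 1}).ncard] a = a)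

variable {C}

/-- `I_L(w)`: the set of simple reflections with target `w.tgt` below `w` in weak order. -/
def IL (w : Mor C) : Set I := {i | weakLe (sgen C w.tgt i) w}

/-- `m` is the longest element of `Hom(-,a) ∩ W_J(C)`, i.e. `w_J` at the object `a`. -/
def IsLongestPar (a : A) (J : Set I) (m : Mor C) : Prop :=
  m.tgt = a ∧ InParabolic J m ∧
    ∀ x : Mor C, x.tgt = a → InParabolic J x → weakLe x m

/-- `m` is the longest element `w_I` of `Hom(-,a)`. -/
def IsLongestAt (a : A) (m : Mor C) : Prop :=
  m.tgt = a ∧ ∀ x : Mor C, x.tgt = a → weakLe x m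

/-- `z` is the meet of `x` and `y` in `(Hom(-,a), ≤_R)`. -/
def IsMeet (a : A) (x y z : Mor C) : Prop :=
  z.tgt = a ∧ weakLe z x ∧ weakLe z y ∧
    ∀ t : Mor C, t.tgt = a → weakLe t x → weakLe t y → weakLe t z

/-- `z` is the join of `x` and `y` in `(Hom(-,a), ≤_R)`. -/
def IsJoin (a : A) (x y z : Mor C) : Prop :=
  z.tgt = a ∧ weakLe x z ∧ weakLe y z ∧
    ∀ t : Mor C, t.tgt = a → weakLe x t → weakLe y t → weakLe z t

/-- The left coset `u W_J(C) ⊆ Hom(-, u.tgt)`. -/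
def leftCoset (u : Mor C) (J : Set I) : Set (Mor C) :=
  {x | ∃ v : Mor C, InParabolic J v ∧ v.tgt = u.src ∧ x = u.comp v}

end CartanScheme

variable {I A : Type} [Fintype I] [DecidableEq I] [Fintype A] [Nonempty A] [DecidableEq A]

open CartanScheme

/-!
Write `N(w)` for the number of positive roots that `w` sends to negative roots. Composing with a
simple reflection changes `N` by exactly one, so `N(w) ≤ ℓ(w)`, with equal parity. Conversely, if
`w ∈ W_J(C)` and `N(w) > 0`, some `α_j` with `j ∈ J` is sent to a negative root (otherwise every
positive root, a nonnegative combination of simple roots, would stay positive), and `w σ_j` lies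
in `W_J(C)` with `N` one smaller. This produces a `J`-word of length `N(w)`, provided `N(w) = 0`
forces `w = id`. That follows from the sign lemma `ℓ(w σ_s) > ℓ(w) → w(α_s) > 0`, proved by
induction on `ℓ(w)` through a rank-two reduction: in rank two, (R4) makes alternating words of
length twice the number of positive roots trivial, so a rank-two word with `n` inversions can be
shortened to length `n`.
-/

namespace CartanScheme

variable {C : CartanScheme I A}

section Words

lemma sigma_apply_of_ne (a : A) {i k : I} (v : I → ℤ) (h : k ≠ i) :
    C.sigma a i v k = v k := by
  simp [sigma, h]

lemma sigma_rho (a : A) (i : I) : C.sigma (C.ρ i a) i = C.sigma a i := by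
  funext v k
  simp [sigma, C.c_rho]

lemma sigma_add (a : A) (i : I) (u v : I → ℤ) :
    C.sigma a i (u + v) = C.sigma a i u + C.sigma a i v := by
  funext k
  by_cases hk : k = i
  · simp [sigma, hk, mul_add, Finset.sum_add_distrib]
    ring
  · simp [sigma, hk]

lemma sigma_involutive (a : A) (i : I) : Function.Involutive (C.sigma a i) := by
  intro v
  have hsum : ∑ j, C.c a i j * C.sigma a i v j = -∑ j, C.c a i j * v j := by
    simp only [sigma, mul_sub, mul_ite, mul_zero, Finset.sum_sub_distrib, Finset.sum_ite_eq',
      Finset.mem_univ, if_true, C.c_diag]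
    ring
  funext k
  by_cases hk : k = i
  · subst hk
    rw [sigma, if_pos rfl, hsum]
    simp [sigma]
  · simp [sigma, hk]

lemma sigma_single_self (a : A) (i : I) :
    C.sigma a i (Pi.single i 1) = -Pi.single i 1 := by
  funext k
  by_cases hk : k = i
  · subst hk
    simp [sigma, Pi.single_apply, C.c_diag]
  · simp [sigma, hk]

lemma wordTarget_append_singleton (a : A) (l : List I) (i : I) :
    C.wordTarget a (l ++ [i]) = C.wordTarget (C.ρ i a) l :=
  C.wordTarget_append a l [i]

lemma wordMap_append_singleton (a : A) (l : List I) (i : I) :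
    C.wordMap a (l ++ [i]) = C.wordMap (C.ρ i a) l ∘ C.sigma a i :=
  C.wordMap_append a l [i]

lemma wordMap_rho_append_singleton (a : A) (l : List I) (i : I) :
    C.wordMap (C.ρ i a) (l ++ [i]) = C.wordMap a l ∘ C.sigma (C.ρ i a) i := by
  rw [wordMap_append_singleton, C.ρ_invol]

lemma wordTarget_cons_cons_self (a : A) (i : I) (l : List I) :
    C.wordTarget a (i :: i :: l) = C.wordTarget a l :=
  C.ρ_invol i _

lemma wordMap_cons_cons_self (a : A) (i : I) (l : List I) :
    C.wordMap a (i :: i :: l) = C.wordMap a l := by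
  funext v
  simp only [wordMap, wordTarget, Function.comp_apply, sigma_rho, sigma_involutive _ i _]

lemma wordTarget_append_pair_self (a : A) (l : List I) (i : I) :
    C.wordTarget a (l ++ [i, i]) = C.wordTarget a l := by
  rw [C.wordTarget_append, wordTarget_cons_cons_self]
  rfl

lemma wordMap_append_pair_self (a : A) (l : List I) (i : I) :
    C.wordMap a (l ++ [i, i]) = C.wordMap a l := by
  rw [C.wordMap_append, wordMap_cons_cons_self, wordTarget_cons_cons_self]
  rfl

lemma wordMap_add (a : A) (l : List I) (u v : I → ℤ) :
    C.wordMap a l (u + v) = C.wordMap a l u + C.wordMap a l v := by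
  induction l with
  | nil => rfl
  | cons i l ih => simp [wordMap, ih, sigma_add]

lemma wordMap_neg (a : A) (l : List I) (v : I → ℤ) :
    C.wordMap a l (-v) = -C.wordMap a l v :=
  map_neg (AddMonoidHom.mk' _ (wordMap_add a l)) v

lemma wordMap_zero (a : A) (l : List I) : C.wordMap a l 0 = 0 :=
  map_zero (AddMonoidHom.mk' _ (wordMap_add a l))

lemma wordMap_zsmul (a : A) (l : List I) (z : ℤ) (v : I → ℤ) :
    C.wordMap a l (z • v) = z • C.wordMap a l v :=
  map_zsmul (AddMonoidHom.mk' _ (wordMap_add a l)) z v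

lemma wordMap_eq_sum (a : A) (l : List I) (v : I → ℤ) :
    C.wordMap a l v = ∑ m, v m • C.wordMap a l (Pi.single m 1) := by
  conv_lhs => rw [← Finset.univ_sum_single v]
  have := map_sum (AddMonoidHom.mk' (C.wordMap a l) (wordMap_add a l))
    (fun m => Pi.single m (v m)) Finset.univ
  simp only [AddMonoidHom.mk'_apply] at this
  rw [this]
  refine Finset.sum_congr rfl fun m _ => ?_
  rw [← wordMap_zsmul, ← Pi.single_smul', smul_eq_mul, mul_one]

lemma wordMap_eq_id_of_forall_single (a : A) (l : List I)
    (h : ∀ m, C.wordMap a l (Pi.single m 1) = Pi.single m 1) : C.wordMap a l = id := by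
  funext v
  rw [wordMap_eq_sum, id]
  simp_rw [h, ← Pi.single_smul', smul_eq_mul, mul_one]
  exact Finset.univ_sum_single v

lemma wordTarget_reverse (a : A) (l : List I) :
    C.wordTarget (C.wordTarget a l) l.reverse = a := by
  induction l with
  | nil => rfl
  | cons i l ih =>
    rw [List.reverse_cons, wordTarget_append_singleton]
    exact (congrArg (C.wordTarget · l.reverse) (C.ρ_invol i _)).trans ih

lemma leftInverse_wordMap_reverse (a : A) (l : List I) :
    Function.LeftInverse (C.wordMap (C.wordTarget a l) l.reverse) (C.wordMap a l) := by
  induction l with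
  | nil => intro v; rfl
  | cons i l ih =>
    intro v
    rw [List.reverse_cons, wordMap_append_singleton]
    simp only [wordTarget, wordMap, Function.comp_apply, C.ρ_invol, sigma_rho,
      sigma_involutive _ i _]
    exact ih v

lemma rightInverse_wordMap_reverse (a : A) (l : List I) :
    Function.RightInverse (C.wordMap (C.wordTarget a l) l.reverse) (C.wordMap a l) := by
  have := leftInverse_wordMap_reverse (C := C) (C.wordTarget a l) l.reverse
  rwa [wordTarget_reverse, List.reverse_reverse] at this

lemma wordMap_injective (a : A) (l : List I) : Function.Injective (C.wordMap a l) :=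
  (leftInverse_wordMap_reverse a l).injective

lemma wordMap_apply_of_notMem (a : A) {l : List I} (v : I → ℤ) {m : I} (hm : m ∉ l) :
    C.wordMap a l v m = v m := by
  induction l with
  | nil => rfl
  | cons i l ih =>
    rw [List.mem_cons, not_or] at hm
    simp only [wordMap, Function.comp_apply, sigma_apply_of_ne _ _ hm.1, ih hm.2]

lemma wordMap_support_subset {K : Set I} (a : A) {l : List I} (hl : ∀ x ∈ l, x ∈ K)
    {v : I → ℤ} (hv : Function.support v ⊆ K) :
    Function.support (C.wordMap a l v) ⊆ K := by
  intro m hm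
  by_contra hmK
  rw [Function.mem_support, wordMap_apply_of_notMem a v fun h => hmK (hl m h)] at hm
  exact hmK (hv hm)

end Words

section Roots

lemma single_pos (i : I) : (0 : I → ℤ) < Pi.single i 1 :=
  Pi.single_pos.mpr one_pos

lemma single_mem_roots (a : A) (j : I) : (Pi.single j 1 : I → ℤ) ∈ C.roots a :=
  ⟨a, [], j, rfl, rfl⟩

lemma wordMap_mem_roots {a : A} {α : I → ℤ} (l : List I) (hα : α ∈ C.roots a) :
    C.wordMap a l α ∈ C.roots (C.wordTarget a l) := by
  obtain ⟨b, l₀, j, rfl, rfl⟩ := hα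
  exact ⟨b, l ++ l₀, j, C.wordTarget_append b l l₀, by rw [C.wordMap_append]; rfl⟩

lemma sigma_mem_roots {a : A} {α : I → ℤ} (i : I) (hα : α ∈ C.roots a) :
    C.sigma a i α ∈ C.roots (C.ρ i a) :=
  wordMap_mem_roots [i] hα

lemma neg_mem_roots {a : A} {α : I → ℤ} (hα : α ∈ C.roots a) : -α ∈ C.roots a := by
  obtain ⟨b, l, j, rfl, rfl⟩ := hα
  refine ⟨C.ρ j b, l ++ [j], j, by rw [wordTarget_append_singleton, C.ρ_invol], ?_⟩
  rw [wordMap_append_singleton, C.ρ_invol, Function.comp_apply, sigma_rho, sigma_single_self,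
    wordMap_neg]

lemma ne_zero_of_mem_roots {a : A} {α : I → ℤ} (hα : α ∈ C.roots a) : α ≠ 0 := by
  obtain ⟨b, l, j, -, rfl⟩ := hα
  rw [← wordMap_zero b l]
  exact (wordMap_injective b l).ne (single_pos j).ne'

lemma pos_or_neg_of_mem_roots (hC : C.IsFRS) {a : A} {α : I → ℤ} (hα : α ∈ C.roots a) :
    0 < α ∨ α < 0 :=
  (hC.2.1 a α hα).imp (fun h => lt_of_le_of_ne h (ne_zero_of_mem_roots hα).symm)
    (fun h => lt_of_le_of_ne h (ne_zero_of_mem_roots hα))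

lemma pos_or_neg_wordMap_single (hC : C.IsFRS) (a : A) (l : List I) (j : I) :
    0 < C.wordMap a l (Pi.single j 1) ∨ C.wordMap a l (Pi.single j 1) < 0 :=
  pos_or_neg_of_mem_roots hC (wordMap_mem_roots l (single_mem_roots a j))

lemma pos_of_mem_roots_of_apply_pos (hC : C.IsFRS) {a : A} {α : I → ℤ} (hα : α ∈ C.roots a)
    {k : I} (hk : 0 < α k) : 0 < α :=
  (pos_or_neg_of_mem_roots hC hα).resolve_right fun h => (h.le k).not_gt hk

lemma sigma_pos_of_pos (hC : C.IsFRS) {a : A} {α : I → ℤ} {i : I} (hα : α ∈ C.roots a)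
    (hpos : 0 < α) (hne : α ≠ Pi.single i 1) : 0 < C.sigma a i α := by
  by_cases hex : ∃ k, k ≠ i ∧ 0 < α k
  · obtain ⟨k, hki, hk⟩ := hex
    exact pos_of_mem_roots_of_apply_pos hC (sigma_mem_roots i hα)
      (by rwa [sigma_apply_of_ne a α hki])
  · push Not at hex
    have hα_eq : α = α i • Pi.single i 1 := by
      funext k
      by_cases hk : k = i
      · subst hk
        simp
      · simp [Pi.single_eq_of_ne hk, le_antisymm (hex k hk) (hpos.le k)]
    rcases hC.2.2.1 a i α hα ⟨α i, hα_eq⟩ with h | h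
    · exact absurd h hne
    · exact absurd (single_pos i) (lt_asymm (neg_pos.mp (h ▸ hpos)))

lemma sigma_ne_single_of_pos (a : A) {α : I → ℤ} {i : I} (hpos : 0 < α) :
    C.sigma a i α ≠ Pi.single i 1 := by
  intro h
  have : α = -Pi.single i 1 := by rw [← sigma_single_self a i, ← h, sigma_involutive]
  exact lt_asymm (single_pos i) (neg_pos.mp (this ▸ hpos))

end Roots

section Inversions

variable (C) in
/-- Positivity `0 < α` is taken in the product order: `0 ≤ α` coordinatewise and `α ≠ 0`. -/
def posRootsOn (K : Set I) (a : A) : Set (I → ℤ) :=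
  {α | α ∈ C.roots a ∧ 0 < α ∧ Function.support α ⊆ K}

variable (C) in
def inversionSet (K : Set I) (a : A) (f : (I → ℤ) → (I → ℤ)) : Set (I → ℤ) :=
  {α | α ∈ C.posRootsOn K a ∧ f α < 0}

variable {K : Set I} {a : A}

lemma posRootsOn_finite (hC : C.IsFRS) : (C.posRootsOn K a).Finite :=
  (hC.1 a).subset fun _ h => h.1

lemma inversionSet_subset_posRootsOn (f : (I → ℤ) → (I → ℤ)) :
    C.inversionSet K a f ⊆ C.posRootsOn K a :=
  fun _ h => h.1

lemma inversionSet_finite (hC : C.IsFRS) (f : (I → ℤ) → (I → ℤ)) :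
    (C.inversionSet K a f).Finite :=
  (posRootsOn_finite hC).subset (inversionSet_subset_posRootsOn f)

lemma inversionSet_id : C.inversionSet K a id = ∅ :=
  Set.eq_empty_of_forall_notMem fun _ h => lt_asymm h.1.2.1 h.2

lemma support_single_subset_of_mem {τ : I} (hτ : τ ∈ K) :
    Function.support (Pi.single τ 1 : I → ℤ) ⊆ K :=
  Pi.support_single_subset.trans (Set.singleton_subset_iff.mpr hτ)

lemma single_mem_posRootsOn {τ : I} (hτ : τ ∈ K) : Pi.single τ 1 ∈ C.posRootsOn K a :=
  ⟨single_mem_roots a τ, single_pos τ, support_single_subset_of_mem hτ⟩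

lemma sigma_mem_posRootsOn (hC : C.IsFRS) {τ : I} (hτ : τ ∈ K) {α : I → ℤ}
    (hα : α ∈ C.posRootsOn K a) (hne : α ≠ Pi.single τ 1) :
    C.sigma a τ α ∈ C.posRootsOn K (C.ρ τ a) :=
  ⟨sigma_mem_roots τ hα.1, sigma_pos_of_pos hC hα.1 hα.2.1 hne,
    wordMap_support_subset (l := [τ]) a (by simpa using hτ) hα.2.2⟩

lemma sigma_mem_posRootsOn_of_rho (hC : C.IsFRS) {τ : I} (hτ : τ ∈ K) {β : I → ℤ}
    (hβ : β ∈ C.posRootsOn K (C.ρ τ a)) (hne : β ≠ Pi.single τ 1) :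
    C.sigma a τ β ∈ C.posRootsOn K a := by
  simpa [sigma_rho, C.ρ_invol] using sigma_mem_posRootsOn hC hτ hβ hne

variable {f : (I → ℤ) → (I → ℤ)} {τ : I}

lemma inversionSet_comp_sigma_of_pos (hC : C.IsFRS) (hτ : τ ∈ K)
    (hf : ∀ v, f (-v) = -f v) (hfτ : 0 < f (Pi.single τ 1)) :
    C.inversionSet K a (f ∘ C.sigma a τ) =
      insert (Pi.single τ 1) (C.sigma a τ '' C.inversionSet K (C.ρ τ a) f) := by
  ext α
  constructor
  · rintro ⟨hα, hneg⟩
    by_cases hne : α = Pi.single τ 1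
    · exact Or.inl hne
    · exact Or.inr ⟨C.sigma a τ α, ⟨sigma_mem_posRootsOn hC hτ hα hne, hneg⟩,
        sigma_involutive a τ α⟩
  · rintro (rfl | ⟨β, ⟨hβ, hneg⟩, rfl⟩)
    · refine ⟨single_mem_posRootsOn hτ, ?_⟩
      rw [Function.comp_apply, sigma_single_self, hf]
      exact neg_neg_iff_pos.mpr hfτ
    · have hne : β ≠ Pi.single τ 1 := by
        rintro rfl
        exact lt_asymm hfτ hneg
      refine ⟨sigma_mem_posRootsOn_of_rho hC hτ hβ hne, ?_⟩
      rwa [Function.comp_apply, sigma_involutive]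

lemma inversionSet_comp_sigma_of_neg (hC : C.IsFRS) (hτ : τ ∈ K)
    (hf : ∀ v, f (-v) = -f v) (hfτ : f (Pi.single τ 1) < 0) :
    C.inversionSet K a (f ∘ C.sigma a τ) =
      C.sigma a τ '' (C.inversionSet K (C.ρ τ a) f \ {Pi.single τ 1}) := by
  ext α
  constructor
  · rintro ⟨hα, hneg⟩
    have hne : α ≠ Pi.single τ 1 := by
      rintro rfl
      rw [Function.comp_apply, sigma_single_self, hf] at hneg
      exact lt_asymm hfτ (neg_neg_iff_pos.mp hneg)
    exact ⟨C.sigma a τ α,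
      ⟨⟨sigma_mem_posRootsOn hC hτ hα hne, hneg⟩, sigma_ne_single_of_pos a hα.2.1⟩,
      sigma_involutive a τ α⟩
  · rintro ⟨β, ⟨⟨hβ, hneg⟩, hne⟩, rfl⟩
    refine ⟨sigma_mem_posRootsOn_of_rho hC hτ hβ hne, ?_⟩
    rwa [Function.comp_apply, sigma_involutive]

lemma ncard_inversionSet_comp_sigma_of_pos (hC : C.IsFRS) (hτ : τ ∈ K)
    (hf : ∀ v, f (-v) = -f v) (hfτ : 0 < f (Pi.single τ 1)) :
    (C.inversionSet K a (f ∘ C.sigma a τ)).ncard =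
      (C.inversionSet K (C.ρ τ a) f).ncard + 1 := by
  have hnotMem : Pi.single τ 1 ∉ C.sigma a τ '' C.inversionSet K (C.ρ τ a) f := by
    rintro ⟨β, hβ, hβτ⟩
    exact sigma_ne_single_of_pos a hβ.1.2.1 hβτ
  rw [inversionSet_comp_sigma_of_pos hC hτ hf hfτ,
    Set.ncard_insert_of_notMem hnotMem ((inversionSet_finite hC f).image _),
    Set.ncard_image_of_injective _ (sigma_involutive a τ).injective]

lemma ncard_inversionSet_comp_sigma_of_neg (hC : C.IsFRS) (hτ : τ ∈ K)
    (hf : ∀ v, f (-v) = -f v) (hfτ : f (Pi.single τ 1) < 0) :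
    (C.inversionSet K a (f ∘ C.sigma a τ)).ncard + 1 =
      (C.inversionSet K (C.ρ τ a) f).ncard := by
  have hmem : Pi.single τ 1 ∈ C.inversionSet K (C.ρ τ a) f := ⟨single_mem_posRootsOn hτ, hfτ⟩
  have hpos := (Set.ncard_pos (inversionSet_finite hC f)).mpr ⟨_, hmem⟩
  rw [inversionSet_comp_sigma_of_neg hC hτ hf hfτ,
    Set.ncard_image_of_injective _ (sigma_involutive a τ).injective,
    Set.ncard_sdiff_singleton_of_mem hmem]
  omega

lemma length_eq_ncard_inversionSet_add_two_mul (hC : C.IsFRS) {l : List I}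
    (hl : ∀ x ∈ l, x ∈ K) :
    ∃ d, l.length = (C.inversionSet K a (C.wordMap a l)).ncard + 2 * d := by
  induction l using List.reverseRecOn generalizing a with
  | nil => exact ⟨0, by simp [wordMap, inversionSet_id]⟩
  | append_singleton l τ ih =>
    have hτ : τ ∈ K := hl τ (by simp)
    obtain ⟨d, hd⟩ := ih (a := C.ρ τ a) fun x hx => hl x (by simp [hx])
    rw [wordMap_append_singleton, List.length_append, List.length_singleton]
    rcases pos_or_neg_wordMap_single hC (C.ρ τ a) l τ with h | h
    · have := ncard_inversionSet_comp_sigma_of_pos (a := a) hC hτ (wordMap_neg _ l) h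
      exact ⟨d, by omega⟩
    · have := ncard_inversionSet_comp_sigma_of_neg (a := a) hC hτ (wordMap_neg _ l) h
      exact ⟨d + 1, by omega⟩

lemma exists_wordMap_single_neg (hC : C.IsFRS) {l : List I} (hl : ∀ x ∈ l, x ∈ K)
    {α : I → ℤ} (hpos : 0 < α) (hneg : C.wordMap a l α < 0) :
    ∃ j ∈ K, C.wordMap a l (Pi.single j 1) < 0 := by
  by_contra h
  have hsingle : ∀ m, 0 ≤ C.wordMap a l (Pi.single m 1) := by
    intro m
    by_cases hm : m ∈ K
    · exact ((pos_or_neg_wordMap_single hC a l m).resolve_right fun hn => h ⟨m, hm, hn⟩).le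
    · have hcoord : C.wordMap a l (Pi.single m 1) m = 1 := by
        rw [wordMap_apply_of_notMem a _ fun hml => hm (hl m hml)]
        simp
      exact (pos_of_mem_roots_of_apply_pos hC (wordMap_mem_roots l (single_mem_roots a m))
        (hcoord ▸ one_pos)).le
  have : 0 ≤ C.wordMap a l α := by
    rw [wordMap_eq_sum]
    exact Finset.sum_nonneg fun m _ => smul_nonneg (hpos.le m) (hsingle m)
  exact this.not_gt hneg

end Inversions

section Transport

variable {K : Set I} {a : A}

lemma ncard_posRootsOn_rho (hC : C.IsFRS) {τ : I} (hτ : τ ∈ K) :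
    (C.posRootsOn K (C.ρ τ a)).ncard = (C.posRootsOn K a).ncard := by
  have himage : C.sigma a τ '' (C.posRootsOn K a \ {Pi.single τ 1}) =
      C.posRootsOn K (C.ρ τ a) \ {Pi.single τ 1} := by
    ext β
    constructor
    · rintro ⟨α, ⟨hα, hne⟩, rfl⟩
      exact ⟨sigma_mem_posRootsOn hC hτ hα hne, sigma_ne_single_of_pos a hα.2.1⟩
    · rintro ⟨hβ, hne⟩
      exact ⟨C.sigma a τ β, ⟨sigma_mem_posRootsOn_of_rho hC hτ hβ hne,
        sigma_ne_single_of_pos a hβ.2.1⟩, sigma_involutive a τ β⟩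
  have hcard := congrArg Set.ncard himage
  rw [Set.ncard_image_of_injective _ (sigma_involutive a τ).injective,
    Set.ncard_sdiff_singleton_of_mem (single_mem_posRootsOn hτ),
    Set.ncard_sdiff_singleton_of_mem (single_mem_posRootsOn hτ)] at hcard
  have h₁ := (Set.ncard_pos (posRootsOn_finite (C := C) (K := K) (a := a) hC)).mpr
    ⟨_, single_mem_posRootsOn hτ⟩
  have h₂ := (Set.ncard_pos (posRootsOn_finite (C := C) (K := K) (a := C.ρ τ a) hC)).mpr
    ⟨_, single_mem_posRootsOn hτ⟩
  omega

lemma ncard_posRootsOn_wordTarget (hC : C.IsFRS) {l : List I} (hl : ∀ x ∈ l, x ∈ K) :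
    (C.posRootsOn K (C.wordTarget a l)).ncard = (C.posRootsOn K a).ncard := by
  induction l with
  | nil => rfl
  | cons i l ih =>
    rw [wordTarget, ncard_posRootsOn_rho hC (hl i (by simp))]
    exact ih fun x hx => hl x (by simp [hx])

lemma wordMap_single_pos_of_inversionSet_eq_empty (hC : C.IsFRS) {l : List I}
    (h : C.inversionSet K a (C.wordMap a l) = ∅) {τ : I} (hτ : τ ∈ K) :
    0 < C.wordMap a l (Pi.single τ 1) :=
  (pos_or_neg_wordMap_single hC a l τ).resolve_right fun hneg =>
    (Set.eq_empty_iff_forall_notMem.mp h) _ ⟨single_mem_posRootsOn hτ, hneg⟩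

lemma inversionSet_reverse_eq_empty {l : List I} (hl : ∀ x ∈ l, x ∈ K)
    (h : C.inversionSet K a (C.wordMap a l) = ∅) :
    C.inversionSet K (C.wordTarget a l) (C.wordMap (C.wordTarget a l) l.reverse) = ∅ := by
  refine Set.eq_empty_of_forall_notMem fun β ⟨⟨hroot, hpos, hsupp⟩, hneg⟩ => ?_
  have hmem :
      -C.wordMap (C.wordTarget a l) l.reverse β ∈ C.inversionSet K a (C.wordMap a l) := by
    refine ⟨⟨neg_mem_roots ?_, neg_pos.mpr hneg, ?_⟩, ?_⟩
    · simpa [wordTarget_reverse] using wordMap_mem_roots l.reverse hroot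
    · rw [Function.support_neg]
      exact wordMap_support_subset _ (by simpa using hl) hsupp
    · rw [wordMap_neg, rightInverse_wordMap_reverse a l β]
      exact neg_neg_iff_pos.mpr hpos
  exact (Set.eq_empty_iff_forall_notMem.mp h) _ hmem

lemma image_neg_inversionSet_append (hC : C.IsFRS) (l₁ : List I) {l₂ : List I}
    (hl₂ : ∀ x ∈ l₂, x ∈ K)
    (hfull : C.inversionSet K a (C.wordMap a l₂) = C.posRootsOn K a) :
    (fun α => -C.wordMap a l₂ α) '' C.inversionSet K a (C.wordMap a (l₁ ++ l₂)) =
      C.posRootsOn K (C.wordTarget a l₂) \ C.inversionSet K (C.wordTarget a l₂)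
        (C.wordMap (C.wordTarget a l₂) l₁) := by
  set z := C.wordTarget a l₂
  set g := C.wordMap a l₂
  set h := C.wordMap z l₁
  have hg_neg : ∀ α ∈ C.posRootsOn K a, g α < 0 := fun α hα => (hfull ▸ hα).2
  ext γ
  constructor
  · rintro ⟨α, ⟨⟨hroot, hpos, hsupp⟩, hneg⟩, rfl⟩
    refine ⟨⟨neg_mem_roots (wordMap_mem_roots l₂ hroot),
      neg_pos.mpr (hg_neg α ⟨hroot, hpos, hsupp⟩), ?_⟩, fun hγ => lt_asymm hneg ?_⟩
    · rw [Function.support_neg]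
      exact wordMap_support_subset a hl₂ hsupp
    · rw [C.wordMap_append]
      simpa [h, wordMap_neg] using hγ.2
  · rintro ⟨hγ, hnot⟩
    set δ := C.wordMap z l₂.reverse γ
    have hδroot : δ ∈ C.roots a := by
      simpa [z, wordTarget_reverse] using wordMap_mem_roots l₂.reverse hγ.1
    have hδsupp : Function.support δ ⊆ K := wordMap_support_subset z (by simpa using hl₂) hγ.2.2
    have hgδ : g δ = γ := rightInverse_wordMap_reverse a l₂ γ
    have hδneg : δ < 0 := (pos_or_neg_of_mem_roots hC hδroot).resolve_left fun hpos =>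
      lt_asymm hγ.2.1 (hgδ ▸ hg_neg δ ⟨hδroot, hpos, hδsupp⟩)
    have hhγ : 0 < h γ := (pos_or_neg_of_mem_roots hC (wordMap_mem_roots l₁ hγ.1)).resolve_right
      fun hneg => hnot ⟨hγ, hneg⟩
    refine ⟨-δ, ⟨⟨neg_mem_roots hδroot, neg_pos.mpr hδneg, by rwa [Function.support_neg]⟩, ?_⟩,
      by simpa only [g, wordMap_neg, neg_neg] using hgδ⟩
    rw [C.wordMap_append, Function.comp_apply, wordMap_neg, wordMap_neg]
    change -h (g δ) < 0
    rw [hgδ]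
    exact neg_neg_iff_pos.mpr hhγ

lemma ncard_inversionSet_append_add_ncard (hC : C.IsFRS) (l₁ : List I) {l₂ : List I}
    (hl₂ : ∀ x ∈ l₂, x ∈ K)
    (hfull : C.inversionSet K a (C.wordMap a l₂) = C.posRootsOn K a) :
    (C.inversionSet K a (C.wordMap a (l₁ ++ l₂))).ncard +
      (C.inversionSet K (C.wordTarget a l₂) (C.wordMap (C.wordTarget a l₂) l₁)).ncard =
      (C.posRootsOn K a).ncard := by
  have hcard := congrArg Set.ncard (image_neg_inversionSet_append hC l₁ hl₂ hfull)
  have hsub := inversionSet_subset_posRootsOn (C := C) (K := K) (a := C.wordTarget a l₂)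
    (C.wordMap (C.wordTarget a l₂) l₁)
  have hinj : Function.Injective fun α => -C.wordMap a l₂ α :=
    neg_injective.comp (wordMap_injective a l₂)
  rw [Set.ncard_image_of_injective _ hinj,
    Set.ncard_sdiff hsub (inversionSet_finite hC _), ncard_posRootsOn_wordTarget hC hl₂] at hcard
  have := Set.ncard_le_ncard hsub (posRootsOn_finite hC)
  rw [ncard_posRootsOn_wordTarget hC hl₂] at this
  omega

end Transport

section RankTwo

variable {s t : I} {a : A}

lemma exists_ne_pair_eq_of_mem (hst : s ≠ t) {c : I} (hc : c ∈ ({s, t} : Set I)) :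
    ∃ d, c ≠ d ∧ ({s, t} : Set I) = {c, d} := by
  rcases hc with rfl | rfl
  · exact ⟨t, hst, rfl⟩
  · exact ⟨s, hst.symm, Set.pair_comm _ _⟩

lemma eq_smul_add_smul_of_support_subset (hst : s ≠ t) {α : I → ℤ}
    (h : Function.support α ⊆ {s, t}) :
    α = α s • Pi.single s 1 + α t • Pi.single t 1 := by
  funext m
  by_cases hms : m = s
  · subst hms
    simp [hst]
  · by_cases hmt : m = t
    · subst hmt
      simp [hms]
    · simp [Function.support_subset_iff'.mp h m (by simp [hms, hmt]), hms, hmt]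

lemma wordMap_single_eq_smul_add_smul (hst : s ≠ t) (a : A) {l : List I}
    (hl : ∀ x ∈ l, x ∈ ({s, t} : Set I)) {τ : I} (hτ : τ ∈ ({s, t} : Set I)) :
    C.wordMap a l (Pi.single τ 1) = C.wordMap a l (Pi.single τ 1) s • Pi.single s 1 +
      C.wordMap a l (Pi.single τ 1) t • Pi.single t 1 :=
  eq_smul_add_smul_of_support_subset hst
    (wordMap_support_subset a hl (support_single_subset_of_mem hτ))

lemma posRootsOn_subset_inversionSet (hst : s ≠ t) {l : List I}
    (hneg : ∀ x ∈ ({s, t} : Set I), C.wordMap a l (Pi.single x 1) < 0) :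
    C.posRootsOn {s, t} a ⊆ C.inversionSet {s, t} a (C.wordMap a l) := by
  intro δ hδ
  refine ⟨hδ, lt_of_le_of_ne ?_ fun h0 =>
    hδ.2.1.ne' (wordMap_injective a l (h0.trans (wordMap_zero a l).symm))⟩
  rw [eq_smul_add_smul_of_support_subset hst hδ.2.2, wordMap_add, wordMap_zsmul, wordMap_zsmul]
  exact add_nonpos (smul_nonpos_of_nonneg_of_nonpos (hδ.2.1.le s) (hneg s (by simp)).le)
    (smul_nonpos_of_nonneg_of_nonpos (hδ.2.1.le t) (hneg t (by simp)).le)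

/-- Along an alternating word, a descent right after an ascent means that both simple roots,
hence all positive roots of the rank-two subsystem, are already inverted. -/
lemma ncard_posRootsOn_le_of_isChain_of_neg (hC : C.IsFRS) (hst : s ≠ t) {l : List I} {τ : I}
    (hl : ∀ x ∈ l ++ [τ], x ∈ ({s, t} : Set I)) (hch : (l ++ [τ]).IsChain (· ≠ ·))
    (hcount : (C.inversionSet {s, t} a (C.wordMap a l)).ncard = l.length)
    (hτ : C.wordMap a l (Pi.single τ 1) < 0) :
    (C.posRootsOn {s, t} a).ncard ≤ l.length := by
  obtain rfl | ⟨l', τ', rfl⟩ := List.eq_nil_or_concat' l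
  · exact absurd hτ (lt_asymm (single_pos τ))
  have hττ' : τ' ≠ τ := by
    rw [List.isChain_append] at hch
    simpa using hch.2.2
  have hτ's : τ' ∈ ({s, t} : Set I) := hl τ' (by simp)
  have hasc : 0 < C.wordMap (C.ρ τ' a) l' (Pi.single τ' 1) := by
    refine (pos_or_neg_wordMap_single hC _ l' τ').resolve_right fun hdesc => ?_
    have h₁ := ncard_inversionSet_comp_sigma_of_neg (a := a) hC hτ's (wordMap_neg _ l') hdesc
    obtain ⟨d, hd⟩ := length_eq_ncard_inversionSet_add_two_mul (a := C.ρ τ' a) (l := l') hC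
      fun x hx => hl x (by simp [hx])
    rw [← wordMap_append_singleton, hcount, List.length_append, List.length_singleton] at h₁
    omega
  have hτ' : C.wordMap a (l' ++ [τ']) (Pi.single τ' 1) < 0 := by
    rw [wordMap_append_singleton, Function.comp_apply, sigma_single_self, wordMap_neg]
    exact neg_neg_iff_pos.mpr hasc
  have hsub := posRootsOn_subset_inversionSet hst (a := a) fun x hx => by
    have hτs := hl τ (by simp)
    simp only [Set.mem_insert_iff, Set.mem_singleton_iff] at hx hτs hτ's
    obtain rfl | rfl : x = τ ∨ x = τ' := by grind
    exacts [hτ, hτ']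
  exact hcount ▸ Set.ncard_le_ncard hsub (inversionSet_finite hC _)

variable {l : List I}

lemma ncard_inversionSet_of_isChain (hC : C.IsFRS) (hst : s ≠ t)
    (hl : ∀ x ∈ l, x ∈ ({s, t} : Set I)) (hch : l.IsChain (· ≠ ·))
    (hlen : l.length ≤ (C.posRootsOn {s, t} a).ncard) :
    (C.inversionSet {s, t} a (C.wordMap a l)).ncard = l.length := by
  induction l using List.reverseRecOn generalizing a with
  | nil => simp [wordMap, inversionSet_id]
  | append_singleton l τ ih =>
    have hτ : τ ∈ ({s, t} : Set I) := hl τ (by simp)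
    have hP := ncard_posRootsOn_rho (a := a) hC hτ
    rw [List.length_append, List.length_singleton] at hlen ⊢
    have hcount := ih (a := C.ρ τ a) (fun x hx => hl x (by simp [hx]))
      (List.isChain_append.mp hch).1 (by omega)
    rw [wordMap_append_singleton]
    rcases pos_or_neg_wordMap_single hC (C.ρ τ a) l τ with h | h
    · rw [ncard_inversionSet_comp_sigma_of_pos hC hτ (wordMap_neg _ l) h, hcount]
    · have := ncard_posRootsOn_le_of_isChain_of_neg hC hst hl hch hcount h
      omega

lemma inversionSet_eq_posRootsOn_of_isChain (hC : C.IsFRS) (hst : s ≠ t)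
    (hl : ∀ x ∈ l, x ∈ ({s, t} : Set I)) (hch : l.IsChain (· ≠ ·))
    (hlen : l.length = (C.posRootsOn {s, t} a).ncard) :
    C.inversionSet {s, t} a (C.wordMap a l) = C.posRootsOn {s, t} a :=
  Set.eq_of_subset_of_ncard_le (inversionSet_subset_posRootsOn _)
    (by rw [ncard_inversionSet_of_isChain hC hst hl hch hlen.le, hlen]) (posRootsOn_finite hC)

lemma ncard_inversionSet_add_length_of_isChain (hC : C.IsFRS) (hst : s ≠ t)
    (hl : ∀ x ∈ l, x ∈ ({s, t} : Set I)) (hch : l.IsChain (· ≠ ·))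
    (hlow : (C.posRootsOn {s, t} a).ncard ≤ l.length)
    (hhigh : l.length ≤ 2 * (C.posRootsOn {s, t} a).ncard) :
    (C.inversionSet {s, t} a (C.wordMap a l)).ncard + l.length =
      2 * (C.posRootsOn {s, t} a).ncard := by
  set P := (C.posRootsOn {s, t} a).ncard
  set l₁ := l.take (l.length - P)
  set l₂ := l.drop (l.length - P)
  have hsplit : l₁ ++ l₂ = l := List.take_append_drop _ l
  obtain ⟨hch₁, hch₂, -⟩ := List.isChain_append.mp (hsplit ▸ hch)
  have hl₂ : ∀ x ∈ l₂, x ∈ ({s, t} : Set I) := fun x hx => hl x (List.mem_of_mem_drop hx)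
  have hlen₂ : l₂.length = P := by simp [l₂]; omega
  have hcount := ncard_inversionSet_append_add_ncard hC l₁ hl₂
    (inversionSet_eq_posRootsOn_of_isChain hC hst hl₂ hch₂ hlen₂)
  rw [hsplit, ncard_inversionSet_of_isChain hC hst (fun x hx => hl x (List.mem_of_mem_take hx))
    hch₁ (by rw [ncard_posRootsOn_wordTarget hC hl₂]; simp; omega)] at hcount
  simp only [List.length_take] at hcount
  omega

end RankTwo

section Identity

variable {K : Set I} {a : A} {l : List I}

lemma wordMap_eq_self_of_support_subset
    (hfix : ∀ j ∈ K, C.wordMap a l (Pi.single j 1) = Pi.single j 1) {v : I → ℤ}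
    (hv : Function.support v ⊆ K) : C.wordMap a l v = v := by
  rw [wordMap_eq_sum]
  conv_rhs => rw [← Finset.univ_sum_single v]
  refine Finset.sum_congr rfl fun m _ => ?_
  by_cases hm : m ∈ K
  · rw [hfix m hm, ← Pi.single_smul', smul_eq_mul, mul_one]
  · rw [Function.support_subset_iff'.mp hv m hm, zero_smul, Pi.single_zero]

/-- For `k ∉ K`, both `l(α_k) = α_k + β` and `l⁻¹(α_k) = α_k - β` are positive roots, and `β` is
supported on `K`; this forces `β = 0`. -/
lemma wordMap_eq_id_of_forall_mem (hC : C.IsFRS) (hl : ∀ x ∈ l, x ∈ K)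
    (hfix : ∀ j ∈ K, C.wordMap a l (Pi.single j 1) = Pi.single j 1) : C.wordMap a l = id := by
  refine wordMap_eq_id_of_forall_single a l fun k => ?_
  by_cases hk : k ∈ K
  · exact hfix k hk
  set β := C.wordMap a l (Pi.single k 1) - Pi.single k 1 with hβ_def
  have hβ : Function.support β ⊆ K := Function.support_subset_iff'.mpr fun m hm => by
    simp [β, wordMap_apply_of_notMem a _ fun h => hm (hl m h)]
  have hinv : C.wordMap (C.wordTarget a l) l.reverse (Pi.single k 1) = Pi.single k 1 - β := by
    apply wordMap_injective a l
    rw [rightInverse_wordMap_reverse, sub_eq_add_neg, wordMap_add, wordMap_neg,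
      wordMap_eq_self_of_support_subset hfix hβ, hβ_def]
    abel
  have hβk : β k = 0 := Function.support_subset_iff'.mp hβ k hk
  have hpos₁ : 0 < Pi.single k 1 + β := by
    refine pos_of_mem_roots_of_apply_pos hC (a := C.wordTarget a l) (k := k) ?_ (by simp [hβk])
    simpa [β] using wordMap_mem_roots l (single_mem_roots a k)
  have hpos₂ : 0 < Pi.single k 1 - β := by
    refine pos_of_mem_roots_of_apply_pos hC (a := a) (k := k) ?_ (by simp [hβk])
    have := wordMap_mem_roots (C := C) l.reverse (single_mem_roots (C.wordTarget a l) k)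
    rwa [hinv, wordTarget_reverse] at this
  have hβ0 : β = 0 := funext fun m => by
    by_cases hmk : m = k
    · exact hmk ▸ hβk
    · have h₁ := hpos₁.le m
      have h₂ := hpos₂.le m
      simp only [Pi.zero_apply, Pi.add_apply, Pi.sub_apply, Pi.single_eq_of_ne hmk] at h₁ h₂
      simp only [Pi.zero_apply]
      omega
  rwa [hβ_def, sub_eq_zero] at hβ0

end Identity

section RankTwoIdentity

variable {s t : I} {a : A} {l : List I}

variable (s t) in
def blockDet (f : (I → ℤ) → (I → ℤ)) : ℤ :=
  f (Pi.single s 1) s * f (Pi.single t 1) t - f (Pi.single s 1) t * f (Pi.single t 1) s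

lemma sigma_apply_self_of_support_subset (hst : s ≠ t) (x : A) {v : I → ℤ}
    (hv : Function.support v ⊆ {s, t}) :
    C.sigma x s v s = -v s - C.c x s t * v t := by
  rw [sigma, if_pos rfl, Fintype.sum_eq_add s t hst fun j hj => by
    rw [Function.support_subset_iff'.mp hv j (by simp [hj.1, hj.2]), mul_zero], C.c_diag]
  ring

lemma blockDet_sigma_comp (hst : s ≠ t) (x : A) {τ : I} (hτ : τ ∈ ({s, t} : Set I))
    {f : (I → ℤ) → (I → ℤ)} (hfs : Function.support (f (Pi.single s 1)) ⊆ {s, t})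
    (hft : Function.support (f (Pi.single t 1)) ⊆ {s, t}) :
    blockDet s t (C.sigma x τ ∘ f) = -blockDet s t f := by
  rcases hτ with rfl | rfl
  · simp only [blockDet, Function.comp_apply, sigma_apply_self_of_support_subset hst x hfs,
      sigma_apply_self_of_support_subset hst x hft, sigma_apply_of_ne x _ hst.symm]
    ring
  · rw [Set.pair_comm] at hfs hft
    simp only [blockDet, Function.comp_apply,
      sigma_apply_self_of_support_subset hst.symm x hfs,
      sigma_apply_self_of_support_subset hst.symm x hft, sigma_apply_of_ne x _ hst]
    ring

lemma blockDet_wordMap (hst : s ≠ t) (a : A) (hl : ∀ x ∈ l, x ∈ ({s, t} : Set I)) :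
    blockDet s t (C.wordMap a l) = (-1) ^ l.length := by
  induction l with
  | nil => simp [wordMap, blockDet, hst, hst.symm]
  | cons i l ih =>
    have hl' : ∀ x ∈ l, x ∈ ({s, t} : Set I) := fun x hx => hl x (by simp [hx])
    have hsupp : ∀ τ ∈ ({s, t} : Set I),
        Function.support (C.wordMap a l (Pi.single τ 1)) ⊆ {s, t} :=
      fun τ hτ => wordMap_support_subset a hl' (support_single_subset_of_mem hτ)
    rw [wordMap, blockDet_sigma_comp hst _ (hl i (by simp)) (hsupp s (by simp))
      (hsupp t (by simp)), ih hl', List.length_cons, pow_succ]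
    ring

lemma blockDet_eq_one_of_inversionSet_eq_empty (hC : C.IsFRS) (hst : s ≠ t)
    (hl : ∀ x ∈ l, x ∈ ({s, t} : Set I)) (h : C.inversionSet {s, t} a (C.wordMap a l) = ∅) :
    blockDet s t (C.wordMap a l) = 1 := by
  obtain ⟨d, hd⟩ := length_eq_ncard_inversionSet_add_two_mul (a := a) hC hl
  rw [h, Set.ncard_empty, zero_add] at hd
  rw [blockDet_wordMap hst a hl, hd, pow_mul]
  norm_num

/-- `h₁`–`h₄` say that `(p q; r u) * (p' q'; r' u') = 1`. -/
lemma eq_one_of_nonneg_of_inverse_nonneg {p q r u p' q' r' u' : ℤ} (hp : 0 ≤ p) (hq : 0 ≤ q)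
    (hr : 0 ≤ r) (hq' : 0 ≤ q') (hr' : 0 ≤ r') (hu' : 0 ≤ u')
    (h₁ : p * p' + q * r' = 1) (h₂ : p * q' + q * u' = 0) (h₃ : r * p' + u * r' = 0)
    (h₄ : r * q' + u * u' = 1) (hdet : p * u - q * r = 1) :
    p = 1 ∧ q = 0 ∧ r = 0 ∧ u = 1 := by
  have hpq' : p * q' = 0 := by nlinarith [mul_nonneg hp hq', mul_nonneg hq hu']
  have hqu' : q * u' = 0 := by nlinarith [mul_nonneg hp hq', mul_nonneg hq hu']
  have hq0 : q = 0 := by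
    refine (mul_eq_zero.mp hqu').resolve_right fun hu'0 => ?_
    rw [hu'0, mul_zero, add_zero] at h₄
    have hp0 : p = 0 := (mul_eq_zero.mp hpq').resolve_right fun h => by simp [h] at h₄
    rw [hp0, zero_mul, zero_sub] at hdet
    nlinarith [mul_nonneg hq hr]
  have hpu : p * u = 1 := by simpa [hq0] using hdet
  have hp1 : p = 1 := Int.eq_one_of_mul_eq_one_right hp hpu
  have hp'1 : p' = 1 := by simpa [hp1, hq0] using h₁
  have hu1 : u = 1 := by simpa [hp1] using hpu
  rw [hp'1, hu1, mul_one, one_mul] at h₃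
  exact ⟨hp1, hq0, by omega, hu1⟩

lemma wordMap_eq_id_of_inversionSet_eq_empty (hC : C.IsFRS) (hst : s ≠ t)
    (hl : ∀ x ∈ l, x ∈ ({s, t} : Set I))
    (h : C.inversionSet {s, t} a (C.wordMap a l) = ∅) : C.wordMap a l = id := by
  set f := C.wordMap a l
  set f' := C.wordMap (C.wordTarget a l) l.reverse
  have hs : s ∈ ({s, t} : Set I) := by simp
  have ht : t ∈ ({s, t} : Set I) := by simp
  have hpos : ∀ τ ∈ ({s, t} : Set I), 0 < f (Pi.single τ 1) :=
    fun _ hτ => wordMap_single_pos_of_inversionSet_eq_empty hC h hτ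
  have hpos' : ∀ τ ∈ ({s, t} : Set I), 0 < f' (Pi.single τ 1) :=
    fun _ hτ =>
      wordMap_single_pos_of_inversionSet_eq_empty hC (inversionSet_reverse_eq_empty hl h) hτ
  have hexp : ∀ τ ∈ ({s, t} : Set I),
      f (Pi.single τ 1) =
        f (Pi.single τ 1) s • Pi.single s 1 + f (Pi.single τ 1) t • Pi.single t 1 :=
    fun _ hτ => wordMap_single_eq_smul_add_smul hst a hl hτ
  have hinv : ∀ τ ∈ ({s, t} : Set I),
      f (Pi.single τ 1) s • f' (Pi.single s 1) + f (Pi.single τ 1) t • f' (Pi.single t 1) =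
        Pi.single τ 1 := by
    intro τ hτ
    rw [← wordMap_zsmul, ← wordMap_zsmul, ← wordMap_add, ← hexp τ hτ]
    exact leftInverse_wordMap_reverse a l _
  obtain ⟨hp, hq, hr, hu⟩ := eq_one_of_nonneg_of_inverse_nonneg
    ((hpos s hs).le s) ((hpos s hs).le t) ((hpos t ht).le s)
    ((hpos' s hs).le t) ((hpos' t ht).le s) ((hpos' t ht).le t)
    (by simpa [hst] using congrFun (hinv s hs) s) (by simpa [hst] using congrFun (hinv s hs) t)
    (by simpa [hst.symm] using congrFun (hinv t ht) s)
    (by simpa [hst.symm] using congrFun (hinv t ht) t)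
    (blockDet_eq_one_of_inversionSet_eq_empty hC hst hl h)
  refine wordMap_eq_id_of_forall_mem hC hl fun j hj => ?_
  obtain rfl | rfl : s = j ∨ t = j := by simpa [eq_comm] using hj
  · change f _ = _
    rw [hexp _ hs, show f (Pi.single s 1) s = 1 from hp, show f (Pi.single s 1) t = 0 from hq]
    simp
  · change f _ = _
    rw [hexp _ ht, show f (Pi.single t 1) s = 0 from hr, show f (Pi.single t 1) t = 1 from hu]
    simp

lemma wordTarget_eq_iterate_of_isChain {c d : I} (k : ℕ) (hch : l.IsChain (· ≠ ·))
    (hl : ∀ x ∈ l, x = c ∨ x = d) (hlen : l.length = 2 * k) (hhead : ∀ x ∈ l.head?, x = c) :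
    C.wordTarget a l = (fun x => C.ρ c (C.ρ d x))^[k] a := by
  induction k generalizing l with
  | zero =>
    rw [List.length_eq_zero_iff.mp hlen]
    rfl
  | succ k ih =>
    obtain _ | ⟨x, _ | ⟨y, l⟩⟩ := l
    · simp only [List.length_nil] at hlen
      omega
    · simp only [List.length_singleton] at hlen
      omega
    obtain ⟨hxy, hch'⟩ := List.isChain_cons_cons.mp hch
    obtain rfl : x = c := hhead x rfl
    obtain rfl : y = d := (hl y (by simp)).resolve_left (Ne.symm hxy)
    have hhead' : ∀ z ∈ l.head?, z = x := by
      obtain _ | ⟨z, l⟩ := l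
      · simp
      · rintro _ ⟨⟩
        exact (hl z (by simp)).resolve_right (List.isChain_cons_cons.mp hch').1.symm
    rw [wordTarget, wordTarget, ih (l := l) hch'.tail (fun z hz => hl z (by simp [hz]))
      (by simp at hlen; omega) hhead', Function.iterate_succ_apply']

lemma roots_inter_eq_posRootsOn (hst : s ≠ t) (a : A) :
    C.roots a ∩ {α | ∃ m n : ℕ, α = (m : ℤ) • Pi.single s 1 + (n : ℤ) • Pi.single t 1} =
      C.posRootsOn {s, t} a := by
  ext α
  constructor
  · rintro ⟨hroot, m, n, rfl⟩
    refine ⟨hroot, lt_of_le_of_ne ?_ (ne_zero_of_mem_roots hroot).symm,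
      (Function.support_add _ _).trans (Set.union_subset ?_ ?_)⟩
    · exact add_nonneg (smul_nonneg (by positivity) (single_pos s).le)
        (smul_nonneg (by positivity) (single_pos t).le)
    · exact (Function.support_const_smul_subset _ _).trans (support_single_subset_of_mem (by simp))
    · exact (Function.support_const_smul_subset _ _).trans (support_single_subset_of_mem (by simp))
  · rintro ⟨hroot, hpos, hsupp⟩
    refine ⟨hroot, (α s).toNat, (α t).toNat, ?_⟩
    rw [Int.toNat_of_nonneg (hpos.le s), Int.toNat_of_nonneg (hpos.le t)]
    exact eq_smul_add_smul_of_support_subset hst hsupp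

/-- Axiom (R4) enters only here. -/
lemma wordTarget_eq_self_of_isChain (hC : C.IsFRS) (hst : s ≠ t)
    (hl : ∀ x ∈ l, x ∈ ({s, t} : Set I)) (hch : l.IsChain (· ≠ ·))
    (hlen : l.length = 2 * (C.posRootsOn {s, t} a).ncard) : C.wordTarget a l = a := by
  obtain _ | ⟨c, l'⟩ := l
  · rfl
  obtain ⟨d, hcd, hK⟩ := exists_ne_pair_eq_of_mem hst (hl c (by simp))
  rw [hK] at hl hlen
  have hR4 := hC.2.2.2 a c d hcd
  rw [roots_inter_eq_posRootsOn hcd] at hR4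
  rw [wordTarget_eq_iterate_of_isChain _ hch (fun x hx => by simpa using hl x hx) hlen (by simp)]
  exact hR4

lemma wordMap_eq_id_and_wordTarget_eq_of_length_eq (hC : C.IsFRS) (hst : s ≠ t)
    (hl : ∀ x ∈ l, x ∈ ({s, t} : Set I)) (hch : l.IsChain (· ≠ ·))
    (hlen : l.length = 2 * (C.posRootsOn {s, t} a).ncard) :
    C.wordMap a l = id ∧ C.wordTarget a l = a := by
  have hcount := ncard_inversionSet_add_length_of_isChain hC hst hl hch (by omega) hlen.le
  refine ⟨wordMap_eq_id_of_inversionSet_eq_empty hC hst hl ?_,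
    wordTarget_eq_self_of_isChain hC hst hl hch hlen⟩
  exact (Set.ncard_eq_zero (inversionSet_finite hC _)).mp (by omega)

lemma wordMap_eq_id_and_wordTarget_eq_of_isChain (hC : C.IsFRS) (hst : s ≠ t)
    (hl : ∀ x ∈ l, x ∈ ({s, t} : Set I)) (hch : l.IsChain (· ≠ ·))
    (h : C.inversionSet {s, t} a (C.wordMap a l) = ∅) :
    C.wordMap a l = id ∧ C.wordTarget a l = a := by
  obtain ⟨n, hn⟩ : ∃ n, l.length = n := ⟨_, rfl⟩
  induction n using Nat.strong_induction_on generalizing l with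
  | _ n ih =>
    set P := (C.posRootsOn {s, t} a).ncard
    have hP : 1 ≤ P := (Set.ncard_pos (posRootsOn_finite hC)).mpr
      ⟨_, single_mem_posRootsOn (by simp : s ∈ ({s, t} : Set I))⟩
    have hcount : (C.inversionSet {s, t} a (C.wordMap a l)).ncard = 0 := by
      rw [h, Set.ncard_empty]
    rcases le_total l.length P with hle | hge
    · have := ncard_inversionSet_of_isChain hC hst hl hch hle
      rw [List.length_eq_zero_iff.mp (by omega : l.length = 0)]
      exact ⟨rfl, rfl⟩
    rcases lt_or_ge l.length (2 * P) with hlt | hge₂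
    · have := ncard_inversionSet_add_length_of_isChain hC hst hl hch hge hlt.le
      omega
    -- an alternating word of length `2 P` is trivial, so it can be cut off
    set l₁ := l.take (l.length - 2 * P)
    set l₂ := l.drop (l.length - 2 * P)
    have hsplit : l₁ ++ l₂ = l := List.take_append_drop _ l
    obtain ⟨hch₁, hch₂, -⟩ := List.isChain_append.mp (hsplit ▸ hch)
    obtain ⟨hmap₂, htgt₂⟩ := wordMap_eq_id_and_wordTarget_eq_of_length_eq (a := a) hC hst
      (fun x hx => hl x (List.mem_of_mem_drop hx)) hch₂ (by simp; omega)
    have hmap : C.wordMap a l = C.wordMap a l₁ := by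
      rw [← hsplit, C.wordMap_append, htgt₂, hmap₂]
      rfl
    have htgt : C.wordTarget a l = C.wordTarget a l₁ := by
      rw [← hsplit, C.wordTarget_append, htgt₂]
    rw [hmap, htgt]
    exact ih _ (by simp [l₁]; omega) (fun x hx => hl x (List.mem_of_mem_take hx)) hch₁
      (hmap ▸ h) rfl

lemma exists_sublist_isChain_ne (a : A) (l : List I) :
    ∃ l' : List I, l'.Sublist l ∧ l'.IsChain (· ≠ ·) ∧
      C.wordTarget a l' = C.wordTarget a l ∧ C.wordMap a l' = C.wordMap a l := by
  induction l with
  | nil => exact ⟨[], List.Sublist.slnil, List.isChain_nil, rfl, rfl⟩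
  | cons x l ih =>
    obtain ⟨l', hsub, hch, htgt, hmap⟩ := ih
    have htgt' : C.wordTarget a (x :: l') = C.wordTarget a (x :: l) := by
      simp only [wordTarget, htgt]
    have hmap' : C.wordMap a (x :: l') = C.wordMap a (x :: l) := by
      simp only [wordMap, htgt, hmap]
    rcases l' with _ | ⟨y, l''⟩
    · exact ⟨[x], hsub.cons_cons x, List.isChain_singleton x, htgt', hmap'⟩
    by_cases hxy : x = y
    · subst hxy
      exact ⟨l'', ((List.sublist_cons_self x l'').trans hsub).cons x, hch.tail,
        by rw [← htgt', wordTarget_cons_cons_self], by rw [← hmap', wordMap_cons_cons_self]⟩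
    · exact ⟨x :: y :: l'', hsub.cons_cons x, List.isChain_cons_cons.mpr ⟨hxy, hch⟩,
        htgt', hmap'⟩

theorem exists_length_eq_ncard_inversionSet (hC : C.IsFRS) (hst : s ≠ t)
    (hl : ∀ x ∈ l, x ∈ ({s, t} : Set I)) :
    ∃ l' : List I, l'.length = (C.inversionSet {s, t} a (C.wordMap a l)).ncard ∧
      C.wordTarget a l' = C.wordTarget a l ∧ C.wordMap a l' = C.wordMap a l := by
  obtain ⟨n, hn⟩ : ∃ n, (C.inversionSet {s, t} a (C.wordMap a l)).ncard = n := ⟨_, rfl⟩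
  induction n generalizing a l with
  | zero =>
    obtain ⟨l', hsub, hch, htgt, hmap⟩ := exists_sublist_isChain_ne (C := C) a l
    obtain ⟨hid, htgt'⟩ := wordMap_eq_id_and_wordTarget_eq_of_isChain hC hst
      (fun x hx => hl x (hsub.subset hx)) hch
      (hmap ▸ (Set.ncard_eq_zero (inversionSet_finite hC _)).mp hn)
    exact ⟨[], hn.symm, by rw [← htgt, htgt']; rfl, by rw [← hmap, hid]; rfl⟩
  | succ n ih =>
    obtain ⟨α, hα⟩ :=
      Set.nonempty_of_ncard_ne_zero (s := C.inversionSet {s, t} a (C.wordMap a l)) (by omega)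
    obtain ⟨τ, hτ, hneg⟩ := exists_wordMap_single_neg hC hl hα.1.2.1 hα.2
    have hcount := ncard_inversionSet_comp_sigma_of_neg (a := C.ρ τ a) hC hτ
      (wordMap_neg a l) hneg
    rw [C.ρ_invol, hn, ← wordMap_rho_append_singleton] at hcount
    obtain ⟨m, hm, htgt, hmap⟩ := ih (a := C.ρ τ a) (l := l ++ [τ])
      (fun x hx => (List.mem_append.mp hx).elim (hl x) fun h => by simp_all) (by omega)
    refine ⟨m ++ [τ], by simp [hm]; omega, ?_, ?_⟩
    · rw [wordTarget_append_singleton, htgt, ← wordTarget_append_singleton, List.append_assoc]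
      exact wordTarget_append_pair_self a l τ
    · rw [wordMap_append_singleton, hmap, ← wordMap_append_singleton, List.append_assoc]
      exact wordMap_append_pair_self a l τ

end RankTwoIdentity

namespace Mor

lemma toFun_neg (w : Mor C) (v : I → ℤ) : w.toFun (-v) = -w.toFun v := by
  obtain ⟨l, -, hl⟩ := w.spec
  rw [← hl, wordMap_neg]

lemma pos_or_neg_toFun_single (hC : C.IsFRS) (w : Mor C) (j : I) :
    0 < w.toFun (Pi.single j 1) ∨ w.toFun (Pi.single j 1) < 0 := by
  obtain ⟨l, -, hl⟩ := w.spec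
  exact hl ▸ pos_or_neg_wordMap_single hC w.src l j

noncomputable def numInversions (w : Mor C) : ℕ :=
  (C.inversionSet Set.univ w.src w.toFun).ncard

end Mor

section Length

open Mor

variable {w : Mor C} {l : List I} {τ : I}

lemma Realizes.length_eq_numInversions_add_two_mul (hC : C.IsFRS) (h : Realizes w l) :
    ∃ d, l.length = w.numInversions + 2 * d := by
  rw [numInversions, ← h.2]
  exact length_eq_ncard_inversionSet_add_two_mul hC fun _ _ => Set.mem_univ _

lemma exists_realizes_length_eq_len (w : Mor C) : ∃ l, Realizes w l ∧ l.length = len w :=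
  Nat.sInf_mem (s := {k | ∃ l, Realizes w l ∧ l.length = k})
    (let ⟨l, hl⟩ := w.spec; ⟨_, l, hl, rfl⟩)

lemma len_le_of_realizes (h : Realizes w l) : len w ≤ l.length :=
  Nat.sInf_le ⟨l, h, rfl⟩

lemma lenPar_le_of_realizes {J : Set I} (hlJ : ∀ i ∈ l, i ∈ J) (h : Realizes w l) :
    lenPar J w ≤ l.length :=
  Nat.sInf_le ⟨l, hlJ, h, rfl⟩

lemma exists_parabolic_realizes_length_eq_lenPar {J : Set I} (hw : InParabolic J w) :
    ∃ l, (∀ i ∈ l, i ∈ J) ∧ Realizes w l ∧ l.length = lenPar J w :=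
  Nat.sInf_mem (s := {k | ∃ l, (∀ i ∈ l, i ∈ J) ∧ Realizes w l ∧ l.length = k})
    (let ⟨l, hlJ, hl⟩ := hw; ⟨_, l, hlJ, hl, rfl⟩)

lemma numInversions_le_len (hC : C.IsFRS) (w : Mor C) : w.numInversions ≤ len w := by
  obtain ⟨l, hl, hlen⟩ := exists_realizes_length_eq_len w
  obtain ⟨d, hd⟩ := hl.length_eq_numInversions_add_two_mul hC
  omega

lemma toFun_eq_id_of_len_eq_zero (h : len w = 0) : w.toFun = id ∧ w.tgt = w.src := by
  obtain ⟨l, hl, hlen⟩ := exists_realizes_length_eq_len w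
  rw [h, List.length_eq_zero_iff] at hlen
  subst hlen
  exact ⟨hl.2.symm, hl.1.symm⟩

lemma realizes_append_pair_self_iff : Realizes w (l ++ [τ, τ]) ↔ Realizes w l := by
  rw [Realizes, Realizes, wordTarget_append_pair_self, wordMap_append_pair_self]

end Length

namespace Mor

variable {w : Mor C} {τ : I}

def mulSigma (w : Mor C) (τ : I) : Mor C := w.comp (sgen C w.src τ)

@[simp] lemma mulSigma_src : (w.mulSigma τ).src = C.ρ τ w.src := by
  simp [mulSigma, Mor.comp, sgen]

@[simp] lemma mulSigma_tgt : (w.mulSigma τ).tgt = w.tgt := by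
  simp [mulSigma, Mor.comp, sgen]

@[simp] lemma mulSigma_toFun : (w.mulSigma τ).toFun = w.toFun ∘ C.sigma (C.ρ τ w.src) τ := by
  simp [mulSigma, Mor.comp, sgen]

lemma mulSigma_mulSigma (w : Mor C) (τ : I) : (w.mulSigma τ).mulSigma τ = w := by
  refine Mor.ext (by simp [C.ρ_invol]) (by simp) ?_
  funext v
  simp [C.ρ_invol, sigma_rho, sigma_involutive _ τ _]

lemma numInversions_mulSigma_of_pos (hC : C.IsFRS) (h : 0 < w.toFun (Pi.single τ 1)) :
    (w.mulSigma τ).numInversions = w.numInversions + 1 := by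
  have := ncard_inversionSet_comp_sigma_of_pos (a := C.ρ τ w.src) hC (Set.mem_univ τ)
    w.toFun_neg h
  rw [C.ρ_invol] at this
  rwa [numInversions, numInversions, mulSigma_src, mulSigma_toFun]

lemma numInversions_mulSigma_of_neg (hC : C.IsFRS) (h : w.toFun (Pi.single τ 1) < 0) :
    (w.mulSigma τ).numInversions + 1 = w.numInversions := by
  have := ncard_inversionSet_comp_sigma_of_neg (a := C.ρ τ w.src) hC (Set.mem_univ τ)
    w.toFun_neg h
  rw [C.ρ_invol] at this
  rwa [numInversions, numInversions, mulSigma_src, mulSigma_toFun]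

end Mor

section MulSigma

open Mor

variable {w : Mor C} {l : List I} {τ : I}

lemma Realizes.mulSigma (h : Realizes w l) (τ : I) : Realizes (w.mulSigma τ) (l ++ [τ]) := by
  refine ⟨?_, ?_⟩
  · rw [mulSigma_src, wordTarget_append_singleton, C.ρ_invol, h.1, mulSigma_tgt]
  · rw [mulSigma_src, wordMap_rho_append_singleton, h.2, mulSigma_toFun]

lemma Realizes.of_mulSigma (h : Realizes (w.mulSigma τ) l) : Realizes w (l ++ [τ]) := by
  simpa only [mulSigma_mulSigma] using h.mulSigma τ

lemma len_mulSigma_le (w : Mor C) (τ : I) : len (w.mulSigma τ) ≤ len w + 1 := by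
  obtain ⟨l, hl, hlen⟩ := exists_realizes_length_eq_len w
  simpa [hlen] using len_le_of_realizes (hl.mulSigma τ)

lemma len_le_len_mulSigma (w : Mor C) (τ : I) : len w ≤ len (w.mulSigma τ) + 1 := by
  obtain ⟨l, hl, hlen⟩ := exists_realizes_length_eq_len (w.mulSigma τ)
  simpa [hlen] using len_le_of_realizes hl.of_mulSigma

lemma exists_len_mulSigma_add_one_eq (h : len w ≠ 0) : ∃ τ, len (w.mulSigma τ) + 1 = len w := by
  obtain ⟨l, hl, hlen⟩ := exists_realizes_length_eq_len w
  obtain rfl | ⟨l', τ, rfl⟩ := List.eq_nil_or_concat' l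
  · exact absurd hlen.symm h
  refine ⟨τ, le_antisymm ?_ (len_le_len_mulSigma w τ)⟩
  have hreal : Realizes (w.mulSigma τ) l' :=
    realizes_append_pair_self_iff.mp (by simpa using hl.mulSigma τ)
  have := len_le_of_realizes hreal
  simp only [List.length_append, List.length_singleton] at hlen
  omega

lemma len_mulSigma_eq_or (hC : C.IsFRS) (w : Mor C) (τ : I) :
    len (w.mulSigma τ) = len w + 1 ∨ len (w.mulSigma τ) + 1 = len w := by
  obtain ⟨l, hl, hlen⟩ := exists_realizes_length_eq_len w
  obtain ⟨m, hm, hmlen⟩ := exists_realizes_length_eq_len (w.mulSigma τ)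
  obtain ⟨d, hd⟩ := hl.length_eq_numInversions_add_two_mul hC
  obtain ⟨e, he⟩ := hm.length_eq_numInversions_add_two_mul hC
  have h₁ := len_mulSigma_le w τ
  have h₂ := len_le_len_mulSigma w τ
  rcases pos_or_neg_toFun_single hC w τ with h | h
  · have := numInversions_mulSigma_of_pos hC h
    omega
  · have := numInversions_mulSigma_of_neg hC h
    omega

end MulSigma

section SignLemma

open Mor

variable {s t : I}

/-- Strip the letters `s`, `t` off the right of `w` while they shorten it. -/
lemma exists_decomposition (hC : C.IsFRS) (w : Mor C) :
    ∃ (v : Mor C) (l : List I), (∀ x ∈ l, x ∈ ({s, t} : Set I)) ∧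
      v.src = C.wordTarget w.src l ∧ v.tgt = w.tgt ∧ w.toFun = v.toFun ∘ C.wordMap w.src l ∧
      len w = len v + l.length ∧ len v < len (v.mulSigma s) ∧ len v < len (v.mulSigma t) := by
  obtain ⟨n, hn⟩ : ∃ n, len w = n := ⟨_, rfl⟩
  induction n using Nat.strong_induction_on generalizing w with
  | _ n ih =>
    by_cases hasc : len w < len (w.mulSigma s) ∧ len w < len (w.mulSigma t)
    · exact ⟨w, [], by simp, rfl, rfl, rfl, rfl, hasc.1, hasc.2⟩
    obtain ⟨τ, hτ, hτw⟩ : ∃ τ ∈ ({s, t} : Set I), len (w.mulSigma τ) + 1 = len w := by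
      rcases not_and_or.mp hasc with hs | ht
      · exact ⟨s, by simp, (len_mulSigma_eq_or hC w s).resolve_left (by omega)⟩
      · exact ⟨t, by simp, (len_mulSigma_eq_or hC w t).resolve_left (by omega)⟩
    obtain ⟨v, l, hl, hsrc, htgt, hfun, hlen, hvs, hvt⟩ := ih _ (by omega) (w.mulSigma τ) rfl
    refine ⟨v, l ++ [τ], fun x hx => (List.mem_append.mp hx).elim (hl x) (by simp_all), ?_,
      by rw [htgt, mulSigma_tgt], ?_, by simp; omega, hvs, hvt⟩
    · rw [hsrc, mulSigma_src, wordTarget_append_singleton]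
    · rw [wordMap_append_singleton, ← Function.comp_assoc, ← mulSigma_src, ← hfun,
        mulSigma_toFun]
      funext x
      simp [sigma_rho, sigma_involutive _ τ _]

lemma pos_toFun_single_of_decomposition (hC : C.IsFRS) (hst : s ≠ t) {w v : Mor C}
    {l : List I} (hl : ∀ x ∈ l, x ∈ ({s, t} : Set I))
    (hfun : w.toFun = v.toFun ∘ C.wordMap w.src l) (hvs : 0 < v.toFun (Pi.single s 1))
    (hvt : 0 < v.toFun (Pi.single t 1)) (hβ : 0 < C.wordMap w.src l (Pi.single s 1)) :
    0 < w.toFun (Pi.single s 1) := by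
  set β := C.wordMap w.src l (Pi.single s 1)
  have hexp : β = β s • Pi.single s 1 + β t • Pi.single t 1 :=
    wordMap_single_eq_smul_add_smul hst w.src hl (by simp)
  obtain ⟨lv, -, hlv⟩ := v.spec
  have hcomb : w.toFun (Pi.single s 1) =
      β s • v.toFun (Pi.single s 1) + β t • v.toFun (Pi.single t 1) := by
    calc w.toFun (Pi.single s 1) = v.toFun (β s • Pi.single s 1 + β t • Pi.single t 1) := by
          rw [← hexp, hfun]
          rfl
      _ = _ := by rw [← hlv, wordMap_add, wordMap_zsmul, wordMap_zsmul]
  have hnonneg : 0 ≤ w.toFun (Pi.single s 1) := by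
    rw [hcomb]
    exact add_nonneg (smul_nonneg (hβ.le s) hvs.le) (smul_nonneg (hβ.le t) hvt.le)
  exact (pos_or_neg_toFun_single hC w s).resolve_right hnonneg.not_gt

/-- If `l(α_s) < 0`, then `l σ_s` has a rank-two expression of length `< l.length`. -/
lemma len_mulSigma_lt_of_decomposition (hC : C.IsFRS) (hst : s ≠ t) {w v : Mor C}
    {l : List I} (hl : ∀ x ∈ l, x ∈ ({s, t} : Set I)) (hsrc : v.src = C.wordTarget w.src l)
    (htgt : v.tgt = w.tgt) (hfun : w.toFun = v.toFun ∘ C.wordMap w.src l)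
    (hlen : len w = len v + l.length) (hβ : C.wordMap w.src l (Pi.single s 1) < 0) :
    len (w.mulSigma s) < len w := by
  have hcount := ncard_inversionSet_comp_sigma_of_neg (a := C.ρ s w.src) (K := {s, t}) hC
    (by simp) (wordMap_neg _ l) hβ
  rw [C.ρ_invol, ← wordMap_rho_append_singleton] at hcount
  obtain ⟨d, hd⟩ := length_eq_ncard_inversionSet_add_two_mul (a := w.src) hC hl
  obtain ⟨m, hm, hmtgt, hmmap⟩ := exists_length_eq_ncard_inversionSet (a := C.ρ s w.src)
    (l := l ++ [s]) hC hst fun x hx => (List.mem_append.mp hx).elim (hl x) (by simp_all)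
  obtain ⟨lv, hlv, hlvlen⟩ := exists_realizes_length_eq_len v
  have hreal : Realizes (w.mulSigma s) (lv ++ m) := by
    refine ⟨?_, ?_⟩
    · rw [mulSigma_src, C.wordTarget_append, hmtgt, wordTarget_append_singleton, C.ρ_invol,
        ← hsrc, hlv.1, mulSigma_tgt, htgt]
    · rw [mulSigma_src, C.wordMap_append, hmtgt, wordTarget_append_singleton, C.ρ_invol,
        ← hsrc, hlv.2, hmmap, wordMap_rho_append_singleton, mulSigma_toFun, hfun]
      rfl
  have := len_le_of_realizes hreal
  rw [List.length_append, hm, hlvlen] at this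
  omega

theorem pos_toFun_single_of_len_lt (hC : C.IsFRS) (w : Mor C) (s : I)
    (h : len w < len (w.mulSigma s)) : 0 < w.toFun (Pi.single s 1) := by
  obtain ⟨n, hn⟩ : ∃ n, len w = n := ⟨_, rfl⟩
  induction n using Nat.strong_induction_on generalizing w s with
  | _ n ih =>
    by_cases h0 : len w = 0
    · rw [(toFun_eq_id_of_len_eq_zero h0).1]
      exact single_pos s
    obtain ⟨t, ht⟩ := exists_len_mulSigma_add_one_eq h0
    have hst : s ≠ t := by
      rintro rfl
      omega
    obtain ⟨v, l, hl, hsrc, htgt, hfun, hlen, hvs, hvt⟩ :=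
      exists_decomposition (s := s) (t := t) hC w
    have hl0 : l ≠ [] := by
      rintro rfl
      obtain rfl : v = w := Mor.ext hsrc htgt hfun.symm
      omega
    have hv : len v < n := by
      have := List.length_pos_iff.mpr hl0
      omega
    rcases pos_or_neg_wordMap_single hC w.src l s with hβ | hβ
    · exact pos_toFun_single_of_decomposition hC hst hl hfun (ih _ hv v s hvs rfl)
        (ih _ hv v t hvt rfl) hβ
    · exact absurd h (len_mulSigma_lt_of_decomposition hC hst hl hsrc htgt hfun hlen hβ).not_gt

theorem toFun_eq_id_of_numInversions_eq_zero (hC : C.IsFRS) (w : Mor C)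
    (h : w.numInversions = 0) : w.toFun = id ∧ w.tgt = w.src := by
  by_cases h0 : len w = 0
  · exact toFun_eq_id_of_len_eq_zero h0
  obtain ⟨τ, hτ⟩ := exists_len_mulSigma_add_one_eq h0
  have hpos := pos_toFun_single_of_len_lt hC (w.mulSigma τ) τ (by rw [mulSigma_mulSigma]; omega)
  rw [mulSigma_toFun, Function.comp_apply, sigma_single_self, toFun_neg, neg_pos] at hpos
  have hmem : Pi.single τ 1 ∈ C.inversionSet Set.univ w.src w.toFun :=
    ⟨single_mem_posRootsOn (Set.mem_univ τ), hpos⟩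
  rw [numInversions, Set.ncard_eq_zero (inversionSet_finite hC _)] at h
  simp [h] at hmem

theorem exists_parabolic_word_length_eq_numInversions (hC : C.IsFRS) {J : Set I} (w : Mor C)
    (hw : InParabolic J w) :
    ∃ l, (∀ i ∈ l, i ∈ J) ∧ Realizes w l ∧ l.length = w.numInversions := by
  obtain ⟨n, hn⟩ : ∃ n, w.numInversions = n := ⟨_, rfl⟩
  induction n generalizing w with
  | zero =>
    obtain ⟨hid, htgt⟩ := toFun_eq_id_of_numInversions_eq_zero hC w hn
    exact ⟨[], by simp, ⟨htgt.symm, hid.symm⟩, hn.symm⟩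
  | succ n ih =>
    obtain ⟨l₀, hl₀J, hl₀⟩ := hw
    obtain ⟨α, hα⟩ :=
      Set.nonempty_of_ncard_ne_zero (s := C.inversionSet Set.univ w.src w.toFun) (by
        rw [← numInversions, hn]
        omega)
    rw [← hl₀.2] at hα
    obtain ⟨j, hjJ, hj⟩ := exists_wordMap_single_neg hC hl₀J hα.1.2.1 hα.2
    rw [hl₀.2] at hj
    have hcount := numInversions_mulSigma_of_neg hC hj
    obtain ⟨m, hmJ, hm, hmlen⟩ := ih (w.mulSigma j)
      ⟨l₀ ++ [j], fun x hx => (List.mem_append.mp hx).elim (hl₀J x) (by simp_all),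
        hl₀.mulSigma j⟩ (by omega)
    exact ⟨m ++ [j], fun x hx => (List.mem_append.mp hx).elim (hmJ x) (by simp_all),
      hm.of_mulSigma, by simp; omega⟩

end SignLemma

end CartanScheme

/-- For `w ∈ W_J(C)` the length with respect to the generators `σ_j`, `j ∈ J`,
equals the length in the full Weyl groupoid. -/
theorem lenPar_eq_len (C : CartanScheme I A) (hC : C.IsFRS)
    (J : Set I) (w : Mor C) (hw : InParabolic J w) :
    lenPar J w = len w := by
  obtain ⟨l, hlJ, hl, hlen⟩ := exists_parabolic_word_length_eq_numInversions hC w hw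
  obtain ⟨l₀, -, hl₀, hl₀len⟩ := exists_parabolic_realizes_length_eq_lenPar hw
  refine le_antisymm ?_ (hl₀len ▸ len_le_of_realizes hl₀)
  calc lenPar J w ≤ l.length := lenPar_le_of_realizes hlJ hl
    _ = w.numInversions := hlen
    _ ≤ len w := numInversions_le_len hC w
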